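/- Let d ≥ 1 and let G₁, …, Gₘ be pairwise vertex-disjoint finite simple connected graphs, with a chosen vertex uᵢ ∈ V(Gᵢ) for each i. Let G be the graph obtained from the disjoint union of G₁, …, Gₘ by adding a clique C of 2d new vertices and making every vertex of C adjacent to uᵢ for every i ∈ {1, …, m}. Then G has a d-cut if and only if there exists some i ∈ {1, …, m} such that Gᵢ has a d-cut. -/

import Mathlib

variable {V : Type*}

/-- A `d`-cut of a simple graph `G`: a partition `(A, B)` of the vertex set into two
nonempty parts such that every vertex of `A` has at most `d` neighbors in `B` and
every vertex of `B` has at most `d` neighbors in `A`. -/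
def IsDCut (G : SimpleGraph V) (d : ℕ) (A B : Set V) : Prop :=
  A.Nonempty ∧ B.Nonempty ∧ Disjoint A B ∧ A ∪ B = Set.univ ∧
    (∀ v ∈ A, (G.neighborSet v ∩ B).ncard ≤ d) ∧
    (∀ v ∈ B, (G.neighborSet v ∩ A).ncard ≤ d)

/-- A vertex set `T` is monochromatic if every `d`-cut of `G` has `T` entirely on one side. -/
def Monochromatic (G : SimpleGraph V) (d : ℕ) (T : Set V) : Prop :=
  ∀ A B : Set V, IsDCut G d A B → T ⊆ A ∨ T ⊆ B

/-- The edge cut of a cut `(A, B)`: the set of edges of `G` with one endpoint in `A`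
and the other endpoint in `B`. -/
def edgeCut (G : SimpleGraph V) (A B : Set V) : Set (Sym2 V) :=
  {e | e ∈ G.edgeSet ∧ ∃ u v, e = s(u, v) ∧ u ∈ A ∧ v ∈ B}

/-- A minimal `d`-cut: no `d`-cut has an edge cut that is a proper subset of its edge cut. -/
def IsMinimalDCut (G : SimpleGraph V) (d : ℕ) (A B : Set V) : Prop :=
  IsDCut G d A B ∧ ∀ A' B' : Set V, IsDCut G d A' B' → ¬ edgeCut G A' B' ⊂ edgeCut G A B

/-- A maximal `d`-cut: no `d`-cut has an edge cut that properly contains its edge cut. -/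
def IsMaximalDCut (G : SimpleGraph V) (d : ℕ) (A B : Set V) : Prop :=
  IsDCut G d A B ∧ ∀ A' B' : Set V, IsDCut G d A' B' → ¬ edgeCut G A B ⊂ edgeCut G A' B'

/-- The graph obtained from the disjoint union of the graphs `Gs i` by adding a clique
`C` of `2d` new vertices and making every vertex of `C` adjacent to the chosen vertex
`u i` of each `Gs i`. -/
def composedGraph (d m : ℕ) (W : Fin m → Type*) (Gs : ∀ i, SimpleGraph (W i))
    (u : ∀ i, W i) : SimpleGraph ((Σ i, W i) ⊕ Fin (2 * d)) :=
  SimpleGraph.fromRel (fun a b =>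
    (∃ (i : Fin m) (x y : W i), a = Sum.inl ⟨i, x⟩ ∧ b = Sum.inl ⟨i, y⟩ ∧ (Gs i).Adj x y) ∨
    (∃ (i : Fin m) (c : Fin (2 * d)), a = Sum.inl ⟨i, u i⟩ ∧ b = Sum.inr c) ∨
    (∃ c c' : Fin (2 * d), a = Sum.inr c ∧ b = Sum.inr c'))


/-! The clique `C` together with one attachment vertex `uᵢ` is a clique on `2d + 1` vertices,
and a `d`-cut cannot split a clique with more than `2d` vertices: a vertex on either side sees
the whole part of the clique on the other side. For `d ≥ 1` these cliques share the vertices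
of `C`, so every `d`-cut of the composed graph has `C` and all the `uᵢ` on one side, and
restricting it to a `Gᵢ` that meets the other side gives a `d`-cut of `Gᵢ`. Conversely, a
`d`-cut `(A, B)` of `Gᵢ` with `uᵢ ∈ A` extends to the composed graph by putting every vertex
outside `B` on the side of `A`, because no vertex of `B` has a neighbour outside `Gᵢ`. -/

namespace IsDCut

variable {V' : Type*} {G : SimpleGraph V} {G' : SimpleGraph V'} {d : ℕ} {A B S : Set V}

theorem symm (h : IsDCut G d A B) : IsDCut G d B A :=
  let ⟨hA, hB, hdisj, huniv, hcA, hcB⟩ := h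
  ⟨hB, hA, hdisj.symm, Set.union_comm A B ▸ huniv, hcB, hcA⟩

theorem isCompl (h : IsDCut G d A B) : IsCompl A B :=
  ⟨h.2.2.1, codisjoint_iff.2 h.2.2.2.1⟩

theorem mem_or_mem (h : IsDCut G d A B) (v : V) : v ∈ A ∨ v ∈ B :=
  (Set.ext_iff.1 h.2.2.2.1 v).2 trivial

theorem subset_or_subset_of_isClique [Finite V] (h : IsDCut G d A B) (hS : G.IsClique S)
    (hcard : 2 * d < S.ncard) : S ⊆ A ∨ S ⊆ B := by
  obtain rfl := h.isCompl.compl_eq.symm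
  by_contra! ⟨hSA, hSB⟩
  obtain ⟨b, hbS, hbA⟩ := Set.not_subset.1 hSA
  obtain ⟨a, haS, haB⟩ := Set.not_subset.1 hSB
  rw [Set.notMem_compl_iff] at haB
  have hA : S ∩ A ⊆ G.neighborSet b ∩ A := fun x ⟨hxS, hxA⟩ =>
    ⟨hS hbS hxS (ne_of_mem_of_not_mem hxA hbA).symm, hxA⟩
  have hB : S \ A ⊆ G.neighborSet a ∩ Aᶜ := fun x ⟨hxS, hxA⟩ =>
    ⟨hS haS hxS (ne_of_mem_of_not_mem haB hxA), hxA⟩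
  have := calc S.ncard
      = (S ∩ A).ncard + (S \ A).ncard := (Set.ncard_inter_add_ncard_sdiff_eq_ncard S A).symm
    _ ≤ (G.neighborSet b ∩ A).ncard + (G.neighborSet a ∩ Aᶜ).ncard :=
        add_le_add (Set.ncard_le_ncard hA) (Set.ncard_le_ncard hB)
    _ ≤ d + d := add_le_add (h.2.2.2.2.2 b hbA) (h.2.2.2.2.1 a haB)
  omega

theorem ncard_neighborSet_inter_preimage_le [Finite V] (f : G' ↪g G) (x : V') (S : Set V) :
    (G'.neighborSet x ∩ f ⁻¹' S).ncard ≤ (G.neighborSet (f x) ∩ S).ncard :=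
  Set.ncard_le_ncard_of_injOn f (fun _ ⟨hadj, hy⟩ => ⟨f.map_adj_iff.2 hadj, hy⟩)
    f.injective.injOn

theorem ncard_neighborSet_inter_image (f : G' ↪g G) (x : V') (S : Set V') :
    (G.neighborSet (f x) ∩ f '' S).ncard = (G'.neighborSet x ∩ S).ncard := by
  rw [← Set.ncard_image_of_injective _ f.injective]
  congr 1
  ext w
  constructor
  · rintro ⟨hadj, y, hy, rfl⟩
    exact ⟨y, ⟨f.map_adj_iff.1 hadj, hy⟩, rfl⟩
  · rintro ⟨y, ⟨hadj, hy⟩, rfl⟩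
    exact ⟨f.map_adj_iff.2 hadj, y, hy, rfl⟩

theorem comap [Finite V] (h : IsDCut G d A B) (f : G' ↪g G) (hA : (f ⁻¹' A).Nonempty)
    (hB : (f ⁻¹' B).Nonempty) : IsDCut G' d (f ⁻¹' A) (f ⁻¹' B) :=
  ⟨hA, hB, h.isCompl.disjoint.preimage f,
    by rw [← Set.preimage_union, h.2.2.2.1, Set.preimage_univ],
    fun x hx => (ncard_neighborSet_inter_preimage_le f x B).trans (h.2.2.2.2.1 _ hx),
    fun x hx => (ncard_neighborSet_inter_preimage_le f x A).trans (h.2.2.2.2.2 _ hx)⟩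

theorem extend {A B : Set V'} (h : IsDCut G' d A B) (f : G' ↪g G)
    (hB : ∀ x ∈ B, G.neighborSet (f x) ⊆ Set.range f) : IsDCut G d (f '' B)ᶜ (f '' B) := by
  obtain rfl : A = Bᶜ := h.isCompl.eq_compl
  refine ⟨(h.1.image f).mono (Set.image_compl_subset f.injective), h.2.1.image f,
    disjoint_compl_left, Set.compl_union_self _, ?_, ?_⟩
  · intro v hv
    by_cases hvf : v ∈ Set.range f
    · obtain ⟨y, rfl⟩ := hvf
      rw [ncard_neighborSet_inter_image]
      exact h.2.2.2.2.1 y fun hy => hv ⟨y, hy, rfl⟩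
    · have : G.neighborSet v ∩ f '' B = ∅ := by
        refine Set.eq_empty_of_forall_notMem ?_
        rintro _ ⟨hadj, x, hx, rfl⟩
        exact hvf (hB x hx hadj.symm)
      simp [this]
  · rintro _ ⟨x, hx, rfl⟩
    have : G.neighborSet (f x) ∩ (f '' B)ᶜ = G.neighborSet (f x) ∩ f '' Bᶜ := by
      rw [Set.image_compl_eq_range_sdiff_image f.injective, ← Set.inter_sdiff_assoc,
        Set.inter_eq_left.2 (hB x hx), Set.sdiff_eq]
    rw [this, ncard_neighborSet_inter_image]
    exact h.2.2.2.2.2 x hx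

end IsDCut

namespace composedGraph

variable {d m : ℕ} {W : Fin m → Type*} {Gs : ∀ i, SimpleGraph (W i)} {u : ∀ i, W i}

open Sum

theorem fst_eq_of_adj_inl_inl {i j : Fin m} {x : W i} {y : W j}
    (h : (composedGraph d m W Gs u).Adj (inl ⟨i, x⟩) (inl ⟨j, y⟩)) : i = j := by
  simp only [composedGraph, SimpleGraph.fromRel_adj] at h
  aesop

theorem adj_inl_inl {i : Fin m} {x y : W i} :
    (composedGraph d m W Gs u).Adj (inl ⟨i, x⟩) (inl ⟨i, y⟩) ↔ (Gs i).Adj x y := by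
  simp only [composedGraph, SimpleGraph.fromRel_adj]
  refine ⟨?_, fun h => ⟨by simpa using h.ne, .inl (.inl ⟨i, x, y, rfl, rfl, h⟩)⟩⟩
  rintro ⟨-, h | h⟩ <;> aesop (add safe SimpleGraph.Adj.symm)

theorem adj_inl_inr {i : Fin m} {x : W i} {c : Fin (2 * d)} :
    (composedGraph d m W Gs u).Adj (inl ⟨i, x⟩) (inr c) ↔ x = u i := by
  simp only [composedGraph, SimpleGraph.fromRel_adj]
  aesop

theorem adj_inr_inr {c c' : Fin (2 * d)} :
    (composedGraph d m W Gs u).Adj (inr c) (inr c') ↔ c ≠ c' := by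
  simp only [composedGraph, SimpleGraph.fromRel_adj]
  aesop

variable (d Gs u) in
def componentEmbedding (i : Fin m) : Gs i ↪g composedGraph d m W Gs u where
  toFun x := inl ⟨i, x⟩
  inj' _ _ h := by simpa using h
  map_rel_iff' := adj_inl_inl

theorem neighborSet_subset_range {i : Fin m} {x : W i} (hx : x ≠ u i) :
    (composedGraph d m W Gs u).neighborSet (inl ⟨i, x⟩) ⊆
      Set.range (componentEmbedding d Gs u i) := by
  rintro (⟨j, y⟩ | c) hadj
  · obtain rfl := fst_eq_of_adj_inl_inl hadj
    exact ⟨y, rfl⟩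
  · exact absurd (adj_inl_inr.1 hadj) hx

variable (d u) in
def hubClique (i : Fin m) : Set ((Σ i, W i) ⊕ Fin (2 * d)) :=
  insert (inl ⟨i, u i⟩) (Set.range inr)

theorem isClique_hubClique (i : Fin m) :
    (composedGraph d m W Gs u).IsClique (hubClique d u i) := by
  refine Set.Pairwise.insert (fun _ ⟨c, hc⟩ _ ⟨c', hc'⟩ hne => ?_) fun _ ⟨c, hc⟩ _ => ?_
  · subst hc hc'
    exact adj_inr_inr.2 fun h => hne (h ▸ rfl)
  · subst hc
    exact ⟨adj_inl_inr.2 rfl, (adj_inl_inr.2 rfl).symm⟩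

theorem ncard_hubClique (i : Fin m) : (hubClique d u i).ncard = 2 * d + 1 := by
  rw [hubClique, Set.ncard_insert_of_notMem (by simp), ← Set.image_univ,
    Set.ncard_image_of_injective _ inr_injective, Set.ncard_univ, Nat.card_eq_fintype_card,
    Fintype.card_fin]

theorem iUnion_hubClique_subset_or [∀ i, Fintype (W i)] (hd : 1 ≤ d)
    {A B : Set ((Σ i, W i) ⊕ Fin (2 * d))} (h : IsDCut (composedGraph d m W Gs u) d A B) :
    (⋃ i, hubClique d u i) ⊆ A ∨ (⋃ i, hubClique d u i) ⊆ B := by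
  wlog hc : inr ⟨0, by omega⟩ ∈ A generalizing A B
  · exact (this h.symm ((h.mem_or_mem _).resolve_left hc)).symm
  refine .inl (Set.iUnion_subset fun i => ((h.subset_or_subset_of_isClique (isClique_hubClique i)
    (by rw [ncard_hubClique]; omega))).resolve_right fun hB => ?_)
  exact Set.disjoint_left.1 h.isCompl.disjoint hc (hB (Set.mem_insert_of_mem _ ⟨_, rfl⟩))

end composedGraph

open composedGraph in
theorem composedGraph_has_dcut_iff_general (d m : ℕ) (hd : 1 ≤ d) (hm : 1 ≤ m)
    (W : Fin m → Type*) [∀ i, Fintype (W i)]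
    (Gs : ∀ i, SimpleGraph (W i)) (u : ∀ i, W i) :
    (∃ A B : Set ((Σ i, W i) ⊕ Fin (2 * d)), IsDCut (composedGraph d m W Gs u) d A B) ↔
    (∃ i : Fin m, ∃ A B : Set (W i), IsDCut (Gs i) d A B) := by
  constructor
  · rintro ⟨A, B, h⟩
    wlog hA : (⋃ i, hubClique d u i) ⊆ A generalizing A B
    · exact this B A h.symm ((iUnion_hubClique_subset_or hd h).resolve_left hA)
    obtain ⟨⟨i, x⟩ | c, hb⟩ := h.2.1
    · exact ⟨i, _, _, h.comap (componentEmbedding d Gs u i)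
        ⟨u i, hA (Set.mem_iUnion_of_mem i (Set.mem_insert _ _))⟩ ⟨x, hb⟩⟩
    · exact absurd (hA (Set.mem_iUnion_of_mem ⟨0, hm⟩ (Set.mem_insert_of_mem _ ⟨c, rfl⟩)))
        (Set.disjoint_right.1 h.isCompl.disjoint hb)
  · rintro ⟨i, A, B, h⟩
    wlog hu : u i ∈ A generalizing A B
    · exact this B A h.symm ((h.mem_or_mem _).resolve_left hu)
    exact ⟨_, _, h.extend (componentEmbedding d Gs u i) fun x hx =>
      neighborSet_subset_range fun hxu => Set.disjoint_right.1 h.isCompl.disjoint hx (hxu ▸ hu)⟩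

/-- The composed graph has a `d`-cut if and only if one of the constituent connected
graphs has a `d`-cut. -/
theorem composedGraph_has_dcut_iff (d m : ℕ) (hd : 1 ≤ d) (hm : 1 ≤ m)
    (W : Fin m → Type*) [∀ i, Fintype (W i)]
    (Gs : ∀ i, SimpleGraph (W i)) (hconn : ∀ i, (Gs i).Connected) (u : ∀ i, W i) :
    (∃ A B : Set ((Σ i, W i) ⊕ Fin (2 * d)), IsDCut (composedGraph d m W Gs u) d A B) ↔
    (∃ i : Fin m, ∃ A B : Set (W i), IsDCut (Gs i) d A B) :=
  composedGraph_has_dcut_iff_general d m hd hm W Gs u
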